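/- Let η be an ℕ-valued random variable with finite mean k* = E[η], and suppose that for every integer k ≥ 1, k·P(η = k) ≤ Λ·P(η = k-1) for some constant Λ > 0. Then P(η ≥ ⌊k*⌋) ≥ 1/(1 + Λ). -/

import Mathlib

/-! Put `K = ⌊k*⌋` and `T = P(η ≥ K)`. Termwise, `(j + 1 - K) p j` is nonpositive for `j < K`,
equal to `p j` for `j = K`, and at most `p j + j p j` for `j > K`; summing gives
`k* + 1 - K ≤ T + ∑_{j > K} j p j`. The ratio condition shifts the last sum down by one index,
`∑_{j > K} j p j ≤ Λ ∑_{j ≥ K} p j = Λ T`, so `1 ≤ k* + 1 - K ≤ (1 + Λ) T`. -/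

lemma summable_ite_le {f : ℕ → ℝ} (hf : Summable f) (K : ℕ) :
    Summable fun j => if K ≤ j then f j else 0 := by
  refine (hf.indicator {j | K ≤ j}).congr fun j => ?_
  simp [Set.indicator_apply]

section RatioCondition

variable {p : ℕ → ℝ} {Λ : ℝ}

lemma tsum_ite_lt_mul_le_mul_tail (hpsum : Summable p)
    (hmean : Summable fun j : ℕ => (j : ℝ) * p j)
    (hratio : ∀ k : ℕ, 1 ≤ k → (k : ℝ) * p k ≤ Λ * p (k - 1)) (K : ℕ) :
    ∑' j, (if K < j then (j : ℝ) * p j else 0) ≤ Λ * ∑' j, if K ≤ j then p j else 0 := by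
  have htail : Summable fun j => if K < j then (j : ℝ) * p j else 0 :=
    summable_ite_le hmean (K + 1)
  calc ∑' j, (if K < j then (j : ℝ) * p j else 0)
      = ∑' n, if K ≤ n then ((n + 1 : ℕ) : ℝ) * p (n + 1) else 0 := by
        simp [htail.tsum_eq_zero_add]
    _ ≤ ∑' n, Λ * if K ≤ n then p n else 0 := by
        refine (summable_ite_le ((summable_nat_add_iff 1).2 hmean) K).tsum_le_tsum (fun n => ?_)
          ((summable_ite_le hpsum K).mul_left Λ)
        split_ifs
        · simpa using hratio (n + 1) (Nat.le_add_left 1 n)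
        · simp
    _ = Λ * ∑' j, if K ≤ j then p j else 0 := tsum_mul_left

lemma tsum_mul_add_one_sub_le_one_add_mul_tail (hp : ∀ j, 0 ≤ p j) (hsum : ∑' j, p j = 1)
    (hmean : Summable fun j : ℕ => (j : ℝ) * p j)
    (hratio : ∀ k : ℕ, 1 ≤ k → (k : ℝ) * p k ≤ Λ * p (k - 1)) (K : ℕ) :
    ∑' j : ℕ, (j : ℝ) * p j + 1 - K ≤ (1 + Λ) * ∑' j, if K ≤ j then p j else 0 := by
  have hpsum : Summable p := by
    by_contra h
    simp [tsum_eq_zero_of_not_summable h] at hsum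
  have htail : Summable fun j => if K < j then (j : ℝ) * p j else 0 :=
    summable_ite_le hmean (K + 1)
  have htermwise : ∀ j : ℕ, (j : ℝ) * p j + (1 - K) * p j ≤
      (if K ≤ j then p j else 0) + if K < j then (j : ℝ) * p j else 0 := by
    intro j
    have hK : (0 : ℝ) ≤ K := K.cast_nonneg
    rcases lt_trichotomy j K with hj | rfl | hj
    · have : (j : ℝ) + 1 ≤ K := by exact_mod_cast hj
      simp only [hj.not_ge, hj.not_gt, if_false]
      nlinarith [hp j]
    · simp only [le_refl, lt_irrefl, if_true, if_false]
      linarith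
    · simp only [hj.le, hj, if_true]
      nlinarith [hp j]
  calc ∑' j : ℕ, (j : ℝ) * p j + 1 - K
      = ∑' j : ℕ, ((j : ℝ) * p j + (1 - K) * p j) := by
        rw [hmean.tsum_add (hpsum.mul_left _), tsum_mul_left, hsum]
        ring
    _ ≤ ∑' j, ((if K ≤ j then p j else 0) + if K < j then (j : ℝ) * p j else 0) :=
        (hmean.add (hpsum.mul_left _)).tsum_le_tsum htermwise
          ((summable_ite_le hpsum K).add htail)
    _ ≤ (∑' j, if K ≤ j then p j else 0) + Λ * ∑' j, if K ≤ j then p j else 0 := by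
        rw [(summable_ite_le hpsum K).tsum_add htail]
        exact add_le_add le_rfl (tsum_ite_lt_mul_le_mul_tail hpsum hmean hratio K)
    _ = (1 + Λ) * ∑' j, if K ≤ j then p j else 0 := by ring

end RatioCondition

theorem prob_ge_floor_mean_general (p : ℕ → ℝ) (hp : ∀ j, 0 ≤ p j)
    (hsum : ∑' j : ℕ, p j = 1) (hmean : Summable (fun j : ℕ => (j : ℝ) * p j))
    (Λ : ℝ)
    (hratio : ∀ k : ℕ, 1 ≤ k → (k : ℝ) * p k ≤ Λ * p (k - 1)) :
    1 / (1 + Λ) ≤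
      ∑' j : ℕ, if Nat.floor (∑' j : ℕ, (j : ℝ) * p j) ≤ j then p j else 0 := by
  set m := ∑' j : ℕ, (j : ℝ) * p j
  have hfloor : (⌊m⌋₊ : ℝ) ≤ m :=
    Nat.floor_le (tsum_nonneg fun j => mul_nonneg j.cast_nonneg (hp j))
  have hbound := tsum_mul_add_one_sub_le_one_add_mul_tail hp hsum hmean hratio ⌊m⌋₊
  have htail_nonneg : 0 ≤ ∑' j, if ⌊m⌋₊ ≤ j then p j else 0 :=
    tsum_nonneg fun j => by split_ifs <;> simp [hp j]
  have hpos : 0 < 1 + Λ := pos_of_mul_pos_left (by linarith) htail_nonneg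
  rw [div_le_iff₀ hpos]
  linarith

/-- Let `η` be an ℕ-valued random variable with distribution `p`, finite mean
`k* = ∑ j·p j`, and suppose `k·P(η = k) ≤ Λ·P(η = k-1)` for every `k ≥ 1`.
Then `P(η ≥ ⌊k*⌋) ≥ 1/(1 + Λ)`. -/
theorem prob_ge_floor_mean (p : ℕ → ℝ) (hp : ∀ j, 0 ≤ p j)
    (hsum : ∑' j : ℕ, p j = 1) (hmean : Summable (fun j : ℕ => (j : ℝ) * p j))
    (Λ : ℝ) (hΛ : 0 < Λ)
    (hratio : ∀ k : ℕ, 1 ≤ k → (k : ℝ) * p k ≤ Λ * p (k - 1)) :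
    1 / (1 + Λ) ≤
      ∑' j : ℕ, if Nat.floor (∑' j : ℕ, (j : ℝ) * p j) ≤ j then p j else 0 :=
  prob_ge_floor_mean_general p hp hsum hmean Λ hratio
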